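/- arXiv:2601.20071 — 4 statements merged into one kernel-verified Lean document; each statement's English description precedes it below -/
import Mathlib

section
/- Let S be a measurable space, d a probability measure on S, γ ∈ [0,1), and L_π ≥ 0. Let M : S → ℝ^{k×m} be a measurable matrix-valued map with operator norm ‖M(s)‖ ≤ L_π for every s. Let G, Ĝ : S → P(ℝ^m) be measurable families of probability measures with finite first moments, with means m(s) = ∫ x dG(s)(x) and m̂(s) = ∫ x dĜ(s)(x). Define the vectors g = (1/(1−γ)) ∫_S M(s) m(s) dd(s) and ĝ = (1/(1−γ)) ∫_S M(s) m̂(s) dd(s) (assuming these Bochner integrals exist). Then ‖g − ĝ‖ ≤ (L_π/(1−γ)) ∫_S W₁(G(s), Ĝ(s)) dd(s). -/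
open MeasureTheory

/-- The `p`-Wasserstein distance between two measures on a metric space:
the infimum over couplings `π` of `(∫ dist(x,y)^p dπ)^(1/p)`. -/
noncomputable def wassersteinDist {X : Type*} [MeasurableSpace X] [PseudoMetricSpace X]
    (p : ℝ) (μ ν : Measure X) : ℝ :=
  sInf { r : ℝ | ∃ π : Measure (X × X),
    π.map Prod.fst = μ ∧ π.map Prod.snd = ν ∧
    r = (∫ z : X × X, dist z.1 z.2 ^ p ∂π) ^ (1 / p) }

/-- Abstract policy-gradient error bound: with `M(s)` a matrix-valued map of
operator norm at most `L_π`, `G, Ĝ` measurable families of probability measures with means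
`m(s), m̂(s)`, and `g = (1/(1−γ)) ∫ M(s) m(s) dd(s)`, `ĝ = (1/(1−γ)) ∫ M(s) m̂(s) dd(s)`,
we have `‖g − ĝ‖ ≤ (L_π/(1−γ)) ∫ W₁(G(s), Ĝ(s)) dd(s)`. -/
theorem mean_diff_le_W1 {E : Type*} [NormedAddCommGroup E] [NormedSpace ℝ E]
    [MeasurableSpace E] [BorelSpace E] [SecondCountableTopology E]
    (μ ν : Measure E) [IsProbabilityMeasure μ] [IsProbabilityMeasure ν]
    (hμ : Integrable (fun x => x) μ) (hν : Integrable (fun x => x) ν) :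
    ‖(∫ x, x ∂μ) - ∫ x, x ∂ν‖ ≤ wassersteinDist 1 μ ν := by
  apply le_csInf
  · exact ⟨_, μ.prod ν, by simp [Measure.map_fst_prod, Measure.map_snd_prod],
      by simp [Measure.map_fst_prod, Measure.map_snd_prod], rfl⟩
  rintro r ⟨π, hfst, hsnd, rfl⟩
  have h1 : Integrable (fun z : E × E => z.1) π := by
    have := (integrable_map_measure (by rw [hfst]; exact hμ.1)
      measurable_fst.aemeasurable).mp (by rwa [hfst])
    exact this
  have h2 : Integrable (fun z : E × E => z.2) π := by
    have := (integrable_map_measure (by rw [hsnd]; exact hν.1)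
      measurable_snd.aemeasurable).mp (by rwa [hsnd])
    exact this
  have hμint : (∫ x, x ∂μ) = ∫ z : E × E, z.1 ∂π := by
    rw [← hfst, integral_map measurable_fst.aemeasurable]
    rw [hfst]; exact hμ.1
  have hνint : (∫ x, x ∂ν) = ∫ z : E × E, z.2 ∂π := by
    rw [← hsnd, integral_map measurable_snd.aemeasurable]
    rw [hsnd]; exact hν.1
  have hrw : (∫ z : E × E, dist z.1 z.2 ^ (1 : ℝ) ∂π) ^ ((1 : ℝ) / 1)
      = ∫ z : E × E, dist z.1 z.2 ∂π := by
    simp [Real.rpow_one]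
  rw [hrw, hμint, hνint, ← integral_sub h1 h2]
  calc ‖∫ z : E × E, z.1 - z.2 ∂π‖ ≤ ∫ z : E × E, ‖z.1 - z.2‖ ∂π :=
        norm_integral_le_integral_norm _
    _ = ∫ z : E × E, dist z.1 z.2 ∂π := by simp [dist_eq_norm]

theorem policy_gradient_error_bound
    {S : Type*} [MeasurableSpace S] (d : Measure S) [IsProbabilityMeasure d]
    {k m : ℕ} (γ Lπ : ℝ) (hγ0 : 0 ≤ γ) (hγ1 : γ < 1) (hLπ : 0 ≤ Lπ)
    (M : S → EuclideanSpace ℝ (Fin m) →L[ℝ] EuclideanSpace ℝ (Fin k))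
    (hM : ∀ s, ‖M s‖ ≤ Lπ)
    (G G' : S → Measure (EuclideanSpace ℝ (Fin m)))
    (hGmeas : Measurable G) (hG'meas : Measurable G')
    (hGprob : ∀ s, IsProbabilityMeasure (G s)) (hG'prob : ∀ s, IsProbabilityMeasure (G' s))
    (hGmom : ∀ s, Integrable (fun x => x) (G s))
    (hG'mom : ∀ s, Integrable (fun x => x) (G' s))
    (hInt1 : Integrable (fun s => M s (∫ x, x ∂(G s))) d)
    (hInt2 : Integrable (fun s => M s (∫ x, x ∂(G' s))) d)
    (hIntW : Integrable (fun s => wassersteinDist 1 (G s) (G' s)) d) :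
    ‖((1 - γ)⁻¹ • ∫ s, M s (∫ x, x ∂(G s)) ∂d) -
        ((1 - γ)⁻¹ • ∫ s, M s (∫ x, x ∂(G' s)) ∂d)‖ ≤
      (Lπ / (1 - γ)) * ∫ s, wassersteinDist 1 (G s) (G' s) ∂d := by
  have hγ : (0:ℝ) < 1 - γ := by linarith
  rw [← smul_sub, ← integral_sub hInt1 hInt2, norm_smul, Real.norm_eq_abs,
    abs_of_nonneg (by positivity : (0:ℝ) ≤ (1-γ)⁻¹)]
  have key : ∀ s, ‖M s (∫ x, x ∂(G s)) - M s (∫ x, x ∂(G' s))‖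
      ≤ Lπ * wassersteinDist 1 (G s) (G' s) := by
    intro s
    rw [← map_sub]
    calc ‖M s ((∫ x, x ∂(G s)) - ∫ x, x ∂(G' s))‖
        ≤ ‖M s‖ * ‖(∫ x, x ∂(G s)) - ∫ x, x ∂(G' s)‖ := (M s).le_opNorm _
      _ ≤ Lπ * wassersteinDist 1 (G s) (G' s) := by
          have := mean_diff_le_W1 (G s) (G' s) (hGmom s) (hG'mom s)
          exact mul_le_mul (hM s) this (norm_nonneg _) hLπ
  calc (1-γ)⁻¹ * ‖∫ s, (M s (∫ x, x ∂(G s)) - M s (∫ x, x ∂(G' s))) ∂d‖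
      ≤ (1-γ)⁻¹ * ∫ s, ‖M s (∫ x, x ∂(G s)) - M s (∫ x, x ∂(G' s))‖ ∂d := by
        gcongr; exact norm_integral_le_integral_norm _
    _ ≤ (1-γ)⁻¹ * ∫ s, Lπ * wassersteinDist 1 (G s) (G' s) ∂d := by
        exact mul_le_mul_of_nonneg_left
          (integral_mono (hInt1.sub hInt2).norm (hIntW.const_mul Lπ) key) (by positivity)
    _ = (Lπ / (1 - γ)) * ∫ s, wassersteinDist 1 (G s) (G' s) ∂d := by
        rw [integral_const_mul]; ring
end

section
/- Let γ ≥ 0 and let F_a ∈ ℝ^{n×m}, Π ∈ ℝ^{m×n}, F_s ∈ ℝ^{n×n} be matrices. Consider the (1+m+n)×(1+m+n) block matrix L = γ · M, where M has blocks M₁₁ = 1 (a scalar), M₂₂ = F_aᵀ Πᵀ ∈ ℝ^{m×m}, M₃₂ = F_sᵀ Πᵀ ∈ ℝ^{n×m}, M₃₃ = F_sᵀ ∈ ℝ^{n×n}, and all other blocks zero. Then the spectral norm of L satisfies ‖L‖₂ ≤ γ ( max{1, ‖F_a‖₂ ‖Π‖₂, ‖F_s‖₂} + ‖F_s‖₂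 ‖Π‖₂ ). -/
open Matrix

/-- The spectral norm (`ℓ² → ℓ²` operator norm) of a real matrix. -/
noncomputable def specNorm {m n : Type*} [Fintype m] [Fintype n] [DecidableEq n]
    (A : Matrix m n ℝ) : ℝ :=
  ‖LinearMap.toContinuousLinearMap (Matrix.toEuclideanLin A)‖

open scoped Matrix.Norms.L2Operator

set_option linter.unusedSectionVars false

section Aux

variable {p q r s : Type*} [Fintype p] [Fintype q] [Fintype r] [Fintype s]
  [DecidableEq p] [DecidableEq q] [DecidableEq r] [DecidableEq s]

lemma specNorm_nonneg (A : Matrix p q ℝ) : 0 ≤ specNorm A := norm_nonneg _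

lemma specNorm_mulVec (A : Matrix p q ℝ) (x : EuclideanSpace ℝ q) :
    ‖(WithLp.equiv 2 (p → ℝ)).symm (A *ᵥ (WithLp.equiv 2 (q → ℝ)) x)‖ ≤ specNorm A * ‖x‖ := by
  simpa [Matrix.toEuclideanLin_apply, specNorm] using
    (LinearMap.toContinuousLinearMap (Matrix.toEuclideanLin A)).le_opNorm x

lemma euclid_norm_sq_sum (x : EuclideanSpace ℝ (p ⊕ q)) :
    ‖x‖ ^ 2 = ‖(WithLp.equiv 2 (p → ℝ)).symm (fun i => x (Sum.inl i))‖ ^ 2 +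
      ‖(WithLp.equiv 2 (q → ℝ)).symm (fun j => x (Sum.inr j))‖ ^ 2 := by
  have h := EuclideanSpace.norm_eq x
  have h1 := EuclideanSpace.norm_eq ((WithLp.equiv 2 (p → ℝ)).symm (fun i => x (Sum.inl i)))
  have h2 := EuclideanSpace.norm_eq ((WithLp.equiv 2 (q → ℝ)).symm (fun j => x (Sum.inr j)))
  rw [h, h1, h2]
  rw [Real.sq_sqrt (by positivity), Real.sq_sqrt (by positivity), Real.sq_sqrt (by positivity)]
  simp [Fintype.sum_sum_type, PiLp.toLp_apply]

lemma specNorm_le_of_forall (M : Matrix p q ℝ) {c : ℝ} (hc : 0 ≤ c)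
    (h : ∀ x : EuclideanSpace ℝ q,
      ‖(WithLp.equiv 2 (p → ℝ)).symm (M *ᵥ (WithLp.equiv 2 (q → ℝ)) x)‖ ≤ c * ‖x‖) :
    specNorm M ≤ c := by
  refine ContinuousLinearMap.opNorm_le_bound _ hc fun x => ?_
  simpa [Matrix.toEuclideanLin_apply] using h x

lemma specNorm_fromBlocks_diag_le (A : Matrix p q ℝ) (D : Matrix r s ℝ) :
    specNorm (Matrix.fromBlocks A 0 0 D) ≤ max (specNorm A) (specNorm D) := by
  refine specNorm_le_of_forall _ (le_max_of_le_left (specNorm_nonneg A)) fun x => ?_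
  set c := max (specNorm A) (specNorm D) with hc
  set x₁ : EuclideanSpace ℝ q := (WithLp.equiv 2 (q → ℝ)).symm (fun i => x (Sum.inl i)) with hx₁
  set x₂ : EuclideanSpace ℝ s := (WithLp.equiv 2 (s → ℝ)).symm (fun j => x (Sum.inr j)) with hx₂
  have hxeq : (WithLp.equiv 2 ((q ⊕ s) → ℝ)) x =
      Sum.elim ((WithLp.equiv 2 (q → ℝ)) x₁) ((WithLp.equiv 2 (s → ℝ)) x₂) := by
    funext i; cases i <;> rfl
  have hmv : Matrix.fromBlocks A 0 0 D *ᵥ (WithLp.equiv 2 ((q ⊕ s) → ℝ)) x =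
      Sum.elim (A *ᵥ (WithLp.equiv 2 (q → ℝ)) x₁) (D *ᵥ (WithLp.equiv 2 (s → ℝ)) x₂) := by
    rw [hxeq, Matrix.fromBlocks_mulVec]; simp
  set y : EuclideanSpace ℝ (p ⊕ r) :=
    (WithLp.equiv 2 ((p ⊕ r) → ℝ)).symm (Matrix.fromBlocks A 0 0 D *ᵥ (WithLp.equiv 2 ((q ⊕ s) → ℝ)) x)
  have hy1 : (WithLp.equiv 2 (p → ℝ)).symm (fun i => y (Sum.inl i)) =
      (WithLp.equiv 2 (p → ℝ)).symm (A *ᵥ (WithLp.equiv 2 (q → ℝ)) x₁) := by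
    simp only [y, hmv]; rfl
  have hy2 : (WithLp.equiv 2 (r → ℝ)).symm (fun j => y (Sum.inr j)) =
      (WithLp.equiv 2 (r → ℝ)).symm (D *ᵥ (WithLp.equiv 2 (s → ℝ)) x₂) := by
    simp only [y, hmv]; rfl
  have hA : ‖(WithLp.equiv 2 (p → ℝ)).symm (A *ᵥ (WithLp.equiv 2 (q → ℝ)) x₁)‖ ≤ specNorm A * ‖x₁‖ :=
    specNorm_mulVec A x₁
  have hD : ‖(WithLp.equiv 2 (r → ℝ)).symm (D *ᵥ (WithLp.equiv 2 (s → ℝ)) x₂)‖ ≤ specNorm D * ‖x₂‖ :=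
    specNorm_mulVec D x₂
  have hysq := euclid_norm_sq_sum y
  have hxsq := euclid_norm_sq_sum x
  rw [hy1, hy2] at hysq
  have hcA : specNorm A ≤ c := le_max_left _ _
  have hcD : specNorm D ≤ c := le_max_right _ _
  have hc0 : 0 ≤ c := le_max_of_le_left (specNorm_nonneg A)
  have hA' : ‖(WithLp.equiv 2 (p → ℝ)).symm (A *ᵥ (WithLp.equiv 2 (q → ℝ)) x₁)‖ ≤ c * ‖x₁‖ :=
    hA.trans (mul_le_mul_of_nonneg_right hcA (norm_nonneg x₁))
  have hD' : ‖(WithLp.equiv 2 (r → ℝ)).symm (D *ᵥ (WithLp.equiv 2 (s → ℝ)) x₂)‖ ≤ c * ‖x₂‖ :=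
    hD.trans (mul_le_mul_of_nonneg_right hcD (norm_nonneg x₂))
  have key : ‖y‖ ^ 2 ≤ (c * ‖x‖) ^ 2 := by
    rw [hysq]
    have h1 := pow_le_pow_left₀ (norm_nonneg _) hA' 2
    have h2 := pow_le_pow_left₀ (norm_nonneg _) hD' 2
    calc _ ≤ (c * ‖x₁‖) ^ 2 + (c * ‖x₂‖) ^ 2 := add_le_add h1 h2
    _ = (c * ‖x‖) ^ 2 := by rw [mul_pow, mul_pow, mul_pow, hxsq]; ring
  calc ‖y‖ = Real.sqrt (‖y‖ ^ 2) := (Real.sqrt_sq (norm_nonneg y)).symm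
  _ ≤ Real.sqrt ((c * ‖x‖) ^ 2) := Real.sqrt_le_sqrt key
  _ = c * ‖x‖ := Real.sqrt_sq (mul_nonneg hc0 (norm_nonneg x))

lemma specNorm_fromBlocks_corner_le (C : Matrix r q ℝ) :
    specNorm (Matrix.fromBlocks (0 : Matrix p q ℝ) (0 : Matrix p s ℝ) C 0) ≤ specNorm C := by
  refine specNorm_le_of_forall _ (specNorm_nonneg C) fun x => ?_
  set x₁ : EuclideanSpace ℝ q := (WithLp.equiv 2 (q → ℝ)).symm (fun i => x (Sum.inl i)) with hx₁
  set x₂ : EuclideanSpace ℝ s := (WithLp.equiv 2 (s → ℝ)).symm (fun j => x (Sum.inr j)) with hx₂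
  have hxeq : (WithLp.equiv 2 ((q ⊕ s) → ℝ)) x =
      Sum.elim ((WithLp.equiv 2 (q → ℝ)) x₁) ((WithLp.equiv 2 (s → ℝ)) x₂) := by
    funext i; cases i <;> rfl
  have hmv : Matrix.fromBlocks (0 : Matrix p q ℝ) 0 C 0 *ᵥ (WithLp.equiv 2 ((q ⊕ s) → ℝ)) x =
      Sum.elim (0 : p → ℝ) (C *ᵥ (WithLp.equiv 2 (q → ℝ)) x₁) := by
    rw [hxeq, Matrix.fromBlocks_mulVec]; simp
  set y : EuclideanSpace ℝ (p ⊕ r) :=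
    (WithLp.equiv 2 ((p ⊕ r) → ℝ)).symm
      (Matrix.fromBlocks (0 : Matrix p q ℝ) 0 C 0 *ᵥ (WithLp.equiv 2 ((q ⊕ s) → ℝ)) x)
  have hysq := euclid_norm_sq_sum y
  have hy1 : (WithLp.equiv 2 (p → ℝ)).symm (fun i => y (Sum.inl i)) = 0 := by
    simp only [y, hmv]; ext i; simp [PiLp.toLp_apply]
  have hy2 : (WithLp.equiv 2 (r → ℝ)).symm (fun j => y (Sum.inr j)) =
      (WithLp.equiv 2 (r → ℝ)).symm (C *ᵥ (WithLp.equiv 2 (q → ℝ)) x₁) := by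
    simp only [y, hmv]; rfl
  rw [hy1, hy2, norm_zero] at hysq
  have hC : ‖(WithLp.equiv 2 (r → ℝ)).symm (C *ᵥ (WithLp.equiv 2 (q → ℝ)) x₁)‖ ≤
      specNorm C * ‖x₁‖ := specNorm_mulVec C x₁
  have hxsq := euclid_norm_sq_sum x
  have hx1le : ‖x₁‖ ≤ ‖x‖ := by
    have : ‖x₁‖ ^ 2 ≤ ‖x‖ ^ 2 := by rw [hxsq]; nlinarith [norm_nonneg x₂]
    nlinarith [norm_nonneg x₁, norm_nonneg x]
  have hC' : ‖(WithLp.equiv 2 (r → ℝ)).symm (C *ᵥ (WithLp.equiv 2 (q → ℝ)) x₁)‖ ≤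
      specNorm C * ‖x‖ :=
    hC.trans (mul_le_mul_of_nonneg_left hx1le (specNorm_nonneg C))
  have key : ‖y‖ ^ 2 ≤ (specNorm C * ‖x‖) ^ 2 := by
    rw [hysq]
    have h2 := pow_le_pow_left₀ (norm_nonneg _) hC' 2
    simpa using h2
  calc ‖y‖ = Real.sqrt (‖y‖ ^ 2) := (Real.sqrt_sq (norm_nonneg y)).symm
  _ ≤ Real.sqrt ((specNorm C * ‖x‖) ^ 2) := Real.sqrt_le_sqrt key
  _ = specNorm C * ‖x‖ := Real.sqrt_sq (mul_nonneg (specNorm_nonneg C) (norm_nonneg x))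

lemma specNorm_transpose (A : Matrix p q ℝ) : specNorm Aᵀ = specNorm A := by
  have h : Aᵀ = Aᴴ := by ext i j; simp [Matrix.conjTranspose_apply]
  show ‖Aᵀ‖ = ‖A‖
  rw [h, Matrix.l2_opNorm_conjTranspose]

lemma specNorm_mul_le (A : Matrix p q ℝ) (B : Matrix q r ℝ) :
    specNorm (A * B) ≤ specNorm A * specNorm B :=
  Matrix.l2_opNorm_mul A B

lemma specNorm_add_le (A B : Matrix p q ℝ) : specNorm (A + B) ≤ specNorm A + specNorm B :=
  norm_add_le (E := Matrix p q ℝ) A B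

lemma specNorm_smul (γ : ℝ) (hγ : 0 ≤ γ) (A : Matrix p q ℝ) :
    specNorm (γ • A) = γ * specNorm A := by
  unfold specNorm
  rw [_root_.map_smul, _root_.map_smul]
  rw [show γ * ‖LinearMap.toContinuousLinearMap (Matrix.toEuclideanLin A)‖ =
    ‖γ‖ * ‖LinearMap.toContinuousLinearMap (Matrix.toEuclideanLin A)‖ by
      rw [Real.norm_eq_abs, abs_of_nonneg hγ]]
  exact norm_smul γ (LinearMap.toContinuousLinearMap (Matrix.toEuclideanLin A))

lemma specNorm_one_unit_le : specNorm (1 : Matrix Unit Unit ℝ) ≤ 1 := by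
  refine ContinuousLinearMap.opNorm_le_bound _ zero_le_one fun x => ?_
  simp [Matrix.toEuclideanLin_apply, Matrix.one_mulVec]


end Aux

/-- For `L = γ·M` with blocks `M₁₁ = 1`, `M₂₂ = F_aᵀΠᵀ`, `M₃₂ = F_sᵀΠᵀ`,
`M₃₃ = F_sᵀ` (all others zero), the spectral norm satisfies
`‖L‖₂ ≤ γ(max{1, ‖F_a‖₂‖Π‖₂, ‖F_s‖₂} + ‖F_s‖₂‖Π‖₂)`. -/
theorem sobolev_block_matrix_spectral_norm_le
    {m n : ℕ} (γ : ℝ) (hγ : 0 ≤ γ)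
    (Fa : Matrix (Fin n) (Fin m) ℝ) (Pi : Matrix (Fin m) (Fin n) ℝ)
    (Fs : Matrix (Fin n) (Fin n) ℝ) :
    specNorm (γ • Matrix.fromBlocks (1 : Matrix Unit Unit ℝ) 0 0
        (Matrix.fromBlocks (Faᵀ * Piᵀ) 0 (Fsᵀ * Piᵀ) Fsᵀ)) ≤
      γ * (max 1 (max (specNorm Fa * specNorm Pi) (specNorm Fs)) +
        specNorm Fs * specNorm Pi) := by
  set X1 : Matrix (Fin m ⊕ Fin n) (Fin m ⊕ Fin n) ℝ :=
    Matrix.fromBlocks (Faᵀ * Piᵀ) 0 0 Fsᵀ with hX1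
  set X2 : Matrix (Fin m ⊕ Fin n) (Fin m ⊕ Fin n) ℝ :=
    Matrix.fromBlocks 0 0 (Fsᵀ * Piᵀ) 0 with hX2
  have hsplit : Matrix.fromBlocks (1 : Matrix Unit Unit ℝ) 0 0
      (Matrix.fromBlocks (Faᵀ * Piᵀ) 0 (Fsᵀ * Piᵀ) Fsᵀ) =
      Matrix.fromBlocks 1 0 0 X1 + Matrix.fromBlocks 0 0 0 X2 := by
    rw [hX1, hX2, Matrix.fromBlocks_add, Matrix.fromBlocks_add]
    simp
  rw [specNorm_smul γ hγ, hsplit]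
  refine mul_le_mul_of_nonneg_left ?_ hγ
  have h1 : specNorm (Matrix.fromBlocks (1 : Matrix Unit Unit ℝ) 0 0 X1) ≤
      max 1 (max (specNorm Fa * specNorm Pi) (specNorm Fs)) := by
    refine (specNorm_fromBlocks_diag_le _ _).trans (max_le_max specNorm_one_unit_le ?_)
    refine (specNorm_fromBlocks_diag_le _ _).trans (max_le_max ?_ ?_)
    · calc specNorm (Faᵀ * Piᵀ) ≤ specNorm Faᵀ * specNorm Piᵀ := specNorm_mul_le _ _
      _ = specNorm Fa * specNorm Pi := by rw [specNorm_transpose, specNorm_transpose]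
    · exact (specNorm_transpose Fs).le
  have h2 : specNorm (Matrix.fromBlocks (0 : Matrix Unit Unit ℝ) 0 0 X2) ≤
      specNorm Fs * specNorm Pi := by
    have := specNorm_fromBlocks_diag_le (0 : Matrix Unit Unit ℝ) X2
    have hz : specNorm (0 : Matrix Unit Unit ℝ) = 0 := norm_zero (E := Matrix Unit Unit ℝ)
    rw [hz] at this
    refine this.trans ?_
    rw [max_le_iff]
    constructor
    · exact mul_nonneg (specNorm_nonneg Fs) (specNorm_nonneg Pi)
    · refine (specNorm_fromBlocks_corner_le _).trans ?_
      calc specNorm (Fsᵀ * Piᵀ) ≤ specNorm Fsᵀ * specNorm Piᵀ := specNorm_mul_le _ _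
      _ = specNorm Fs * specNorm Pi := by rw [specNorm_transpose, specNorm_transpose]
  exact (specNorm_add_le _ _).trans (add_le_add h1 h2)
end

section
/- Let h > 0 and let k_h(x,y) = −√(1 + h²‖x−y‖²) be the multiquadric kernel on ℝ^d. For γ > 0 define the Gaussian-kernel discrepancy D_G²(γ; μ, ν) = E[e^{−γ‖X−X'‖²}] + E[e^{−γ‖Y−Y'‖²}] − 2E[e^{−γ‖X−Y‖²}], where X, X' are i.i.d. with law μ and Y, Y' are i.i.d. with law ν, with all four variables independent. Then for all probability measures μ, ν on ℝ^d with finite second moments, MMD²_{k_h}(μ, ν) = (1/(2√π)) ∫₀^∞ e^{−t} t^{−3/2} D_G²(t h²; μ, ν) dt. -/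
open MeasureTheory Set

/-- The squared maximum mean discrepancy between `P` and `Q` with respect to a kernel `k`:
`MMD²_k(P,Q) = ∬ k dP dP + ∬ k dQ dQ − 2 ∬ k dP dQ`. -/
noncomputable def mmdSq {E : Type*} [MeasurableSpace E] (k : E → E → ℝ)
    (P Q : Measure E) : ℝ :=
  (∫ x, ∫ y, k x y ∂P ∂P) + (∫ x, ∫ y, k x y ∂Q ∂Q) - 2 * ∫ x, ∫ y, k x y ∂P ∂Q

/-- The multiquadric kernel with bandwidth `h`: `k_h(x,y) = −√(1 + h²‖x−y‖²)`. -/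
noncomputable def multiquadric {d : ℕ} (h : ℝ) (x y : EuclideanSpace ℝ (Fin d)) : ℝ :=
  -Real.sqrt (1 + h ^ 2 * ‖x - y‖ ^ 2)

/-- The Gaussian kernel with parameter `γ`: `(x,y) ↦ e^{−γ‖x−y‖²}`. -/
noncomputable def gaussianKernel {d : ℕ} (γ : ℝ) (x y : EuclideanSpace ℝ (Fin d)) : ℝ :=
  Real.exp (-(γ * ‖x - y‖ ^ 2))

variable {d : ℕ}


lemma aux_integrableOn_rpow_exp {s : ℝ} (hs : -1 < s) {u : ℝ} (hu : 0 < u) :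
    IntegrableOn (fun t : ℝ => t ^ s * Real.exp (-(u * t))) (Ioi 0) := by
  have := integrableOn_rpow_mul_exp_neg_mul_rpow hs one_pos hu
  simpa [Real.rpow_one, neg_mul] using this

lemma aux_gamma_half {u : ℝ} (hu : 0 < u) :
    ∫ t in Ioi (0:ℝ), t ^ (-(1:ℝ)/2) * Real.exp (-(u * t))
      = Real.sqrt Real.pi / Real.sqrt u := by
  have h := Real.integral_rpow_mul_exp_neg_mul_Ioi (a := 1/2) (r := u) (by norm_num) hu
  have he : (-(1:ℝ)/2) = 1/2 - 1 := by norm_num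
  rw [he, h, Real.Gamma_one_half_eq, ← Real.sqrt_eq_rpow, one_div, Real.sqrt_inv,
    mul_comm, div_eq_mul_inv]

-- measurability of the 2-var function
lemma aux_meas (c : ℝ) : Measurable (fun q : ℝ × ℝ => q.2 ^ c * Real.exp (-(q.1 * q.2))) := by
  fun_prop

-- pointwise identity: for t > 0, 1 ≤ a
lemma aux_pointwise {a t : ℝ} (ha : 1 ≤ a) (ht : 0 < t) :
    t ^ (-(3:ℝ)/2) * (Real.exp (-t) - Real.exp (-(a * t)))
      = ∫ u in Ioc (1:ℝ) a, t ^ (-(1:ℝ)/2) * Real.exp (-(u * t)) := by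
  have hFTC : ∫ u in (1:ℝ)..a, Real.exp (-(u * t))
      = (Real.exp (-t) - Real.exp (-(a * t))) / t := by
    have key : ∀ u : ℝ, HasDerivAt (fun v : ℝ => -(Real.exp (-(v * t)) / t))
        (Real.exp (-(u * t))) u := by
      intro u
      have h1 : HasDerivAt (fun v : ℝ => -(v * t)) (-t) u := by
        simpa using ((hasDerivAt_id u).mul_const t).fun_neg
      have h2 := (h1.exp).div_const t
      have := h2.fun_neg
      refine this.congr_deriv ?_
      rw [mul_neg, neg_div, neg_neg, mul_div_assoc, div_self ht.ne', mul_one]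
    rw [intervalIntegral.integral_eq_sub_of_hasDerivAt (fun u _ => key u)
      ((Real.continuous_exp.comp (by fun_prop)).intervalIntegrable 1 a)]
    rw [one_mul]
    ring
  rw [← intervalIntegral.integral_of_le ha, intervalIntegral.integral_const_mul, hFTC]
  have h32 : t ^ (-(3:ℝ)/2) = t ^ (-(1:ℝ)/2) * t⁻¹ := by
    rw [← Real.rpow_neg_one t, ← Real.rpow_add ht]; norm_num
  rw [h32, div_eq_mul_inv]; ring

-- the key computation
lemma aux_key {a : ℝ} (ha : 1 ≤ a) :
    IntegrableOn (fun t : ℝ => t ^ (-(3:ℝ)/2) * (Real.exp (-t) - Real.exp (-(a * t)))) (Ioi 0)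
    ∧ ∫ t in Ioi (0:ℝ), t ^ (-(3:ℝ)/2) * (Real.exp (-t) - Real.exp (-(a * t)))
      = 2 * Real.sqrt Real.pi * (Real.sqrt a - 1) := by
  set f : ℝ → ℝ → ℝ := fun u t => t ^ (-(1:ℝ)/2) * Real.exp (-(u * t)) with hf
  have hmeas : AEStronglyMeasurable (Function.uncurry f)
      ((volume.restrict (Ioc (1:ℝ) a)).prod (volume.restrict (Ioi (0:ℝ)))) :=
    (aux_meas (-(1:ℝ)/2)).aestronglyMeasurable
  have hslice : ∀ u ∈ Ioc (1:ℝ) a, Integrable (f u) (volume.restrict (Ioi (0:ℝ))) := by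
    intro u hu
    exact aux_integrableOn_rpow_exp (by norm_num) (lt_of_lt_of_le one_pos hu.1.le)
  have hint : Integrable (Function.uncurry f)
      ((volume.restrict (Ioc (1:ℝ) a)).prod (volume.restrict (Ioi (0:ℝ)))) := by
    rw [integrable_prod_iff hmeas]
    constructor
    · filter_upwards [ae_restrict_mem measurableSet_Ioc] with u hu
      exact hslice u hu
    · have hnormint : ∀ u ∈ Ioc (1:ℝ) a,
          (∫ t, ‖f u t‖ ∂(volume.restrict (Ioi (0:ℝ))))
            = Real.sqrt Real.pi / Real.sqrt u := by
        intro u hu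
        have h0u : 0 < u := lt_of_lt_of_le one_pos hu.1.le
        rw [← aux_gamma_half h0u]
        refine setIntegral_congr_fun measurableSet_Ioi (fun t ht => ?_)
        have ht' : (0:ℝ) < t := ht
        exact Real.norm_of_nonneg
          (mul_nonneg (Real.rpow_nonneg ht'.le _) (Real.exp_nonneg _))
      refine (integrable_const (Real.sqrt Real.pi)).mono'
        hmeas.norm.integral_prod_right' ?_
      filter_upwards [ae_restrict_mem measurableSet_Ioc] with u hu
      simp only [Function.uncurry_apply_pair]
      rw [hnormint u hu]
      have h1u : 1 ≤ u := hu.1.le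
      have : Real.sqrt Real.pi / Real.sqrt u ≤ Real.sqrt Real.pi := by
        apply div_le_self (Real.sqrt_nonneg _)
        simpa using Real.sqrt_le_sqrt h1u
      rw [Real.norm_eq_abs, abs_of_nonneg (by positivity)]
      exact this
  have hswap := integral_integral_swap hint
  -- hswap : ∫ u, ∫ t, f u t = ∫ t, ∫ u, f u t
  constructor
  · have := hint.integral_prod_right
    refine this.congr ?_
    filter_upwards [ae_restrict_mem measurableSet_Ioi] with t ht
    exact (aux_pointwise ha ht).symm
  · calc ∫ t in Ioi (0:ℝ), t ^ (-(3:ℝ)/2) * (Real.exp (-t) - Real.exp (-(a * t)))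
        = ∫ t in Ioi (0:ℝ), ∫ u in Ioc (1:ℝ) a, f u t := by
          refine setIntegral_congr_fun measurableSet_Ioi (fun t ht => aux_pointwise ha ht)
      _ = ∫ u in Ioc (1:ℝ) a, ∫ t in Ioi (0:ℝ), f u t := hswap.symm
      _ = ∫ u in Ioc (1:ℝ) a, Real.sqrt Real.pi * u ^ (-(1:ℝ)/2) := by
          refine setIntegral_congr_fun measurableSet_Ioc (fun u hu => ?_)
          have h0u : 0 < u := lt_of_lt_of_le one_pos hu.1.le
          rw [aux_gamma_half h0u, Real.sqrt_eq_rpow u, div_eq_mul_inv,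
            ← Real.rpow_neg h0u.le]
          norm_num
      _ = 2 * Real.sqrt Real.pi * (Real.sqrt a - 1) := by
          rw [integral_const_mul, ← intervalIntegral.integral_of_le ha,
            integral_rpow (Or.inl (by norm_num))]
          rw [Real.sqrt_eq_rpow a]
          norm_num
          ring


lemma aux_normsq_int (P Q : Measure (EuclideanSpace ℝ (Fin d)))
    [IsProbabilityMeasure P] [IsProbabilityMeasure Q]
    (hP : Integrable (fun x => ‖x‖ ^ 2) P) (hQ : Integrable (fun x => ‖x‖ ^ 2) Q) :
    Integrable (fun p : EuclideanSpace ℝ (Fin d) × EuclideanSpace ℝ (Fin d) =>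
      ‖p.1 - p.2‖ ^ 2) (P.prod Q) := by
  have h1 : Integrable (fun p : EuclideanSpace ℝ (Fin d) × EuclideanSpace ℝ (Fin d) =>
      ‖p.1‖ ^ 2 * 1 + 1 * ‖p.2‖ ^ 2) (P.prod Q) :=
    (hP.mul_prod (integrable_const 1)).add ((integrable_const 1).mul_prod hQ)
  refine (h1.const_mul 2).mono' (Continuous.aestronglyMeasurable (by fun_prop)) ?_
  filter_upwards with p
  have h := norm_sub_le p.1 p.2
  have h2 : ‖p.1 - p.2‖ ^ 2 ≤ 2 * (‖p.1‖ ^ 2 * 1 + 1 * ‖p.2‖ ^ 2) := by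
    have hm := mul_le_mul h h (norm_nonneg (p.1 - p.2)) (by positivity)
    nlinarith [sq_nonneg (‖p.1‖ - ‖p.2‖)]
  have h3 : (0:ℝ) ≤ ‖p.1 - p.2‖ ^ 2 := by positivity
  simpa [Real.norm_eq_abs, Pi.add_apply, abs_of_nonneg h3] using h2

lemma aux_gauss_int (γ : ℝ) (hγ : 0 ≤ γ)
    (M : Measure (EuclideanSpace ℝ (Fin d) × EuclideanSpace ℝ (Fin d)))
    [IsProbabilityMeasure M] :
    Integrable (fun p => gaussianKernel γ p.1 p.2) M := by
  refine (integrable_const (1:ℝ)).mono'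
    (Continuous.aestronglyMeasurable (by unfold gaussianKernel; fun_prop)) ?_
  filter_upwards with p
  unfold gaussianKernel
  rw [Real.norm_eq_abs, abs_of_nonneg (Real.exp_nonneg _)]
  exact Real.exp_le_one_iff.2 (neg_nonpos.2 (by positivity))

lemma aux_mq_int (h : ℝ) (P Q : Measure (EuclideanSpace ℝ (Fin d)))
    [IsProbabilityMeasure P] [IsProbabilityMeasure Q]
    (hP : Integrable (fun x => ‖x‖ ^ 2) P) (hQ : Integrable (fun x => ‖x‖ ^ 2) Q) :
    Integrable (fun p => multiquadric h p.1 p.2) (P.prod Q) := by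
  have hn := aux_normsq_int P Q hP hQ
  refine ((integrable_const (1:ℝ)).add (hn.const_mul (h ^ 2))).mono'
    (Continuous.aestronglyMeasurable (by unfold multiquadric; fun_prop)) ?_
  filter_upwards with p
  simp only [Pi.add_apply]
  unfold multiquadric
  rw [Real.norm_eq_abs, abs_neg, abs_of_nonneg (Real.sqrt_nonneg _)]
  have hx : (1:ℝ) ≤ 1 + h ^ 2 * ‖p.1 - p.2‖ ^ 2 := le_add_of_nonneg_right (by positivity)
  refine (Real.sqrt_le_left (by positivity)).2 ?_
  nlinarith

lemma aux_step (h : ℝ) (hh : 0 < h) (P Q : Measure (EuclideanSpace ℝ (Fin d)))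
    [IsProbabilityMeasure P] [IsProbabilityMeasure Q]
    (hP : Integrable (fun x => ‖x‖ ^ 2) P) (hQ : Integrable (fun x => ‖x‖ ^ 2) Q) :
    IntegrableOn (fun t : ℝ => Real.exp (-t) * t ^ (-(3:ℝ)/2) *
        ((∫ p, gaussianKernel (t * h ^ 2) p.1 p.2 ∂(P.prod Q)) - 1)) (Ioi 0)
    ∧ ∫ t in Ioi (0:ℝ), Real.exp (-t) * t ^ (-(3:ℝ)/2) *
        ((∫ p, gaussianKernel (t * h ^ 2) p.1 p.2 ∂(P.prod Q)) - 1)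
      = 2 * Real.sqrt Real.pi * (1 + ∫ p, multiquadric h p.1 p.2 ∂(P.prod Q)) := by
  have hMprob : IsProbabilityMeasure (P.prod Q) := by infer_instance
  set M := P.prod Q with hM
  set F : ℝ → EuclideanSpace ℝ (Fin d) × EuclideanSpace ℝ (Fin d) → ℝ := fun t p =>
    Real.exp (-t) * t ^ (-(3:ℝ)/2) * (gaussianKernel (t * h ^ 2) p.1 p.2 - 1) with hF
  -- pointwise identity
  have hpt : ∀ t : ℝ, 0 < t → ∀ p : EuclideanSpace ℝ (Fin d) × EuclideanSpace ℝ (Fin d),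
      F t p = -(t ^ (-(3:ℝ)/2) * (Real.exp (-t)
        - Real.exp (-((1 + h ^ 2 * ‖p.1 - p.2‖ ^ 2) * t)))) := by
    intro t ht p
    have hexp : Real.exp (-((1 + h ^ 2 * ‖p.1 - p.2‖ ^ 2) * t))
        = Real.exp (-t) * gaussianKernel (t * h ^ 2) p.1 p.2 := by
      rw [gaussianKernel, ← Real.exp_add]; congr 1; ring
    rw [hF, hexp]; ring
  -- measurability
  have hmeasF : AEStronglyMeasurable (Function.uncurry F)
      ((volume.restrict (Ioi (0:ℝ))).prod M) := by
    have : Measurable (Function.uncurry F) := by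
      simp only [hF, Function.uncurry, gaussianKernel]
      fun_prop
    exact this.aestronglyMeasurable
  -- domination
  have hG : Integrable (fun z : ℝ × (EuclideanSpace ℝ (Fin d) × EuclideanSpace ℝ (Fin d)) =>
      (z.1 ^ (-(1:ℝ)/2) * Real.exp (-z.1)) * (h ^ 2 * ‖z.2.1 - z.2.2‖ ^ 2))
      ((volume.restrict (Ioi (0:ℝ))).prod M) := by
    refine Integrable.mul_prod (f := fun t : ℝ => t ^ (-(1:ℝ)/2) * Real.exp (-t))
      (g := fun p : EuclideanSpace ℝ (Fin d) × EuclideanSpace ℝ (Fin d) =>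
        h ^ 2 * ‖p.1 - p.2‖ ^ 2) ?_ ?_
    · simpa [IntegrableOn] using aux_integrableOn_rpow_exp (by norm_num : (-1:ℝ) < -(1:ℝ)/2) one_pos
    · exact (aux_normsq_int P Q hP hQ).const_mul _
  have hae1 : ∀ᵐ z : ℝ × (EuclideanSpace ℝ (Fin d) × EuclideanSpace ℝ (Fin d))
      ∂((volume.restrict (Ioi (0:ℝ))).prod M), z.1 ∈ Ioi (0:ℝ) := by
    have heq : (volume.restrict (Ioi (0:ℝ))).prod M
        = (volume.prod M).restrict ((Ioi (0:ℝ)) ×ˢ univ) := by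
      rw [← Measure.prod_restrict, Measure.restrict_univ]
    rw [heq]
    filter_upwards [ae_restrict_mem (measurableSet_Ioi.prod MeasurableSet.univ)] with z hz
    exact hz.1
  have hFint : Integrable (Function.uncurry F) ((volume.restrict (Ioi (0:ℝ))).prod M) := by
    refine hG.mono' hmeasF ?_
    filter_upwards [hae1] with z hz
    have ht : (0:ℝ) < z.1 := hz
    set t := z.1
    set r2 := ‖z.2.1 - z.2.2‖ ^ 2 with hr2
    have hr2nn : (0:ℝ) ≤ r2 := by positivity
    have hg1 : gaussianKernel (t * h ^ 2) z.2.1 z.2.2 ≤ 1 := by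
      unfold gaussianKernel
      exact Real.exp_le_one_iff.2 (neg_nonpos.2 (by positivity))
    have hg0 : 0 ≤ gaussianKernel (t * h ^ 2) z.2.1 z.2.2 := Real.exp_nonneg _
    have hbound : 1 - gaussianKernel (t * h ^ 2) z.2.1 z.2.2 ≤ t * h ^ 2 * r2 := by
      have := Real.add_one_le_exp (-(t * h ^ 2 * r2))
      unfold gaussianKernel
      rw [hr2] at this ⊢
      linarith
    have h32 : t ^ (-(3:ℝ)/2) * t = t ^ (-(1:ℝ)/2) := by
      nth_rewrite 2 [← Real.rpow_one t]
      rw [← Real.rpow_add ht]; norm_num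
    have habs : ‖Function.uncurry F z‖
        = Real.exp (-t) * t ^ (-(3:ℝ)/2) * (1 - gaussianKernel (t * h ^ 2) z.2.1 z.2.2) := by
      rw [Function.uncurry, hF]
      rw [Real.norm_eq_abs, abs_mul, abs_mul,
        abs_of_nonneg (Real.exp_nonneg _), abs_of_nonneg (Real.rpow_nonneg ht.le _),
        abs_of_nonpos (by linarith : gaussianKernel (t * h ^ 2) z.2.1 z.2.2 - 1 ≤ 0)]
      ring
    rw [habs]
    have hc : (0:ℝ) ≤ Real.exp (-t) * t ^ (-(3:ℝ)/2) := by
      exact mul_nonneg (Real.exp_nonneg _) (Real.rpow_nonneg ht.le _)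
    calc Real.exp (-t) * t ^ (-(3:ℝ)/2) * (1 - gaussianKernel (t * h ^ 2) z.2.1 z.2.2)
        ≤ Real.exp (-t) * t ^ (-(3:ℝ)/2) * (t * h ^ 2 * r2) := by
          exact mul_le_mul_of_nonneg_left hbound hc
      _ = t ^ (-(1:ℝ)/2) * Real.exp (-t) * (h ^ 2 * r2) := by
          rw [← h32]; ring
  -- inner p-integral
  have hinner : ∀ t : ℝ, 0 < t →
      ∫ p, F t p ∂M = Real.exp (-t) * t ^ (-(3:ℝ)/2) *
        ((∫ p, gaussianKernel (t * h ^ 2) p.1 p.2 ∂M) - 1) := by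
    intro t ht
    rw [hF]
    simp only []
    rw [integral_const_mul, integral_sub (aux_gauss_int _ (by positivity) M)
      (integrable_const 1), integral_const]
    simp
  have hswap := integral_integral_swap hFint
  constructor
  · refine hFint.integral_prod_left.congr ?_
    filter_upwards [ae_restrict_mem measurableSet_Ioi] with t ht
    exact hinner t ht
  · calc ∫ t in Ioi (0:ℝ), Real.exp (-t) * t ^ (-(3:ℝ)/2) *
          ((∫ p, gaussianKernel (t * h ^ 2) p.1 p.2 ∂M) - 1)
        = ∫ t in Ioi (0:ℝ), ∫ p, F t p ∂M :=
          setIntegral_congr_fun measurableSet_Ioi (fun t ht => (hinner t ht).symm)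
      _ = ∫ p, (∫ t in Ioi (0:ℝ), F t p) ∂M := hswap
      _ = ∫ p, 2 * Real.sqrt Real.pi * (1 + multiquadric h p.1 p.2) ∂M := by
          refine integral_congr_ae (Filter.Eventually.of_forall (fun p => ?_))
          have ha : (1:ℝ) ≤ 1 + h ^ 2 * ‖p.1 - p.2‖ ^ 2 :=
            le_add_of_nonneg_right (by positivity)
          calc ∫ t in Ioi (0:ℝ), F t p
              = ∫ t in Ioi (0:ℝ), -(t ^ (-(3:ℝ)/2) * (Real.exp (-t)
                  - Real.exp (-((1 + h ^ 2 * ‖p.1 - p.2‖ ^ 2) * t)))) :=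
                setIntegral_congr_fun measurableSet_Ioi (fun t ht => hpt t ht p)
            _ = -(2 * Real.sqrt Real.pi * (Real.sqrt (1 + h ^ 2 * ‖p.1 - p.2‖ ^ 2) - 1)) := by
                rw [integral_neg, (aux_key ha).2]
            _ = 2 * Real.sqrt Real.pi * (1 + multiquadric h p.1 p.2) := by
                rw [multiquadric]; ring
      _ = 2 * Real.sqrt Real.pi * (1 + ∫ p, multiquadric h p.1 p.2 ∂M) := by
          rw [integral_const_mul, integral_add (integrable_const 1)
            (aux_mq_int h P Q hP hQ), integral_const]
          simp [hM]

/-- Gaussian-mixture representation of the multiquadric-kernel MMD: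
`MMD²_{k_h}(μ,ν) = (1/(2√π)) ∫₀^∞ e^{−t} t^{−3/2} D_G²(t h²; μ, ν) dt`. -/
theorem mmdSq_multiquadric_eq_integral_gaussian {d : ℕ} (h : ℝ) (hh : 0 < h)
    (μ ν : Measure (EuclideanSpace ℝ (Fin d)))
    [IsProbabilityMeasure μ] [IsProbabilityMeasure ν]
    (hμ : Integrable (fun x => ‖x‖ ^ 2) μ) (hν : Integrable (fun x => ‖x‖ ^ 2) ν) :
    mmdSq (multiquadric h) μ ν =
      (1 / (2 * Real.sqrt Real.pi)) *
        ∫ t in Set.Ioi (0 : ℝ),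
          Real.exp (-t) * t ^ (-(3 : ℝ) / 2) * mmdSq (gaussianKernel (t * h ^ 2)) μ ν := by
  have hsπ : (0:ℝ) < Real.sqrt Real.pi := Real.sqrt_pos.2 Real.pi_pos
  obtain ⟨i1, v1⟩ := aux_step h hh μ μ hμ hμ
  obtain ⟨i2, v2⟩ := aux_step h hh ν ν hν hν
  obtain ⟨i3, v3⟩ := aux_step h hh ν μ hν hμ
  -- rewrite the t-integrand
  have hcongr : ∫ t in Ioi (0:ℝ),
        Real.exp (-t) * t ^ (-(3:ℝ)/2) * mmdSq (gaussianKernel (t * h ^ 2)) μ ν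
      = ∫ t in Ioi (0:ℝ),
        (Real.exp (-t) * t ^ (-(3:ℝ)/2) *
            ((∫ p, gaussianKernel (t * h ^ 2) p.1 p.2 ∂(μ.prod μ)) - 1)
          + Real.exp (-t) * t ^ (-(3:ℝ)/2) *
            ((∫ p, gaussianKernel (t * h ^ 2) p.1 p.2 ∂(ν.prod ν)) - 1)
          - 2 * (Real.exp (-t) * t ^ (-(3:ℝ)/2) *
            ((∫ p, gaussianKernel (t * h ^ 2) p.1 p.2 ∂(ν.prod μ)) - 1))) := by
    refine setIntegral_congr_fun measurableSet_Ioi (fun t ht => ?_)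
    have ht' : (0:ℝ) < t := ht
    have hγ : (0:ℝ) ≤ t * h ^ 2 := by positivity
    have e1 : ∫ x, ∫ y, gaussianKernel (t * h ^ 2) x y ∂μ ∂μ
        = ∫ p, gaussianKernel (t * h ^ 2) p.1 p.2 ∂(μ.prod μ) :=
      (integral_prod _ (aux_gauss_int _ hγ _)).symm
    have e2 : ∫ x, ∫ y, gaussianKernel (t * h ^ 2) x y ∂ν ∂ν
        = ∫ p, gaussianKernel (t * h ^ 2) p.1 p.2 ∂(ν.prod ν) :=
      (integral_prod _ (aux_gauss_int _ hγ _)).symm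
    have e3 : ∫ x, ∫ y, gaussianKernel (t * h ^ 2) x y ∂μ ∂ν
        = ∫ p, gaussianKernel (t * h ^ 2) p.1 p.2 ∂(ν.prod μ) :=
      (integral_prod _ (aux_gauss_int _ hγ _)).symm
    rw [mmdSq, e1, e2, e3]
    ring
  have hI12 : Integrable (fun t : ℝ =>
      Real.exp (-t) * t ^ (-(3:ℝ)/2) *
          ((∫ p, gaussianKernel (t * h ^ 2) p.1 p.2 ∂(μ.prod μ)) - 1)
        + Real.exp (-t) * t ^ (-(3:ℝ)/2) *
          ((∫ p, gaussianKernel (t * h ^ 2) p.1 p.2 ∂(ν.prod ν)) - 1))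
      (volume.restrict (Ioi 0)) := i1.add i2
  have hI3 : Integrable (fun t : ℝ =>
      2 * (Real.exp (-t) * t ^ (-(3:ℝ)/2) *
          ((∫ p, gaussianKernel (t * h ^ 2) p.1 p.2 ∂(ν.prod μ)) - 1)))
      (volume.restrict (Ioi 0)) := i3.const_mul 2
  rw [hcongr, integral_sub hI12 hI3, integral_add i1 i2,
    integral_const_mul, v1, v2, v3]
  have em1 : ∫ x, ∫ y, multiquadric h x y ∂μ ∂μ
      = ∫ p, multiquadric h p.1 p.2 ∂(μ.prod μ) :=
    (integral_prod _ (aux_mq_int h μ μ hμ hμ)).symm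
  have em2 : ∫ x, ∫ y, multiquadric h x y ∂ν ∂ν
      = ∫ p, multiquadric h p.1 p.2 ∂(ν.prod ν) :=
    (integral_prod _ (aux_mq_int h ν ν hν hν)).symm
  have em3 : ∫ x, ∫ y, multiquadric h x y ∂μ ∂ν
      = ∫ p, multiquadric h p.1 p.2 ∂(ν.prod μ) :=
    (integral_prod _ (aux_mq_int h ν μ hν hμ)).symm
  rw [mmdSq, em1, em2, em3]
  field_simp
  ring
end

section
/- Let X be a measurable space, k : X × X → ℝ a symmetric measurable kernel, and z₀ ∈ X. Define the one-point centered kernel k°(x,y) = k(x,y) − k(x,z₀) − k(z₀,y) + k(z₀,z₀). For probability measures P, Q on X for which all the relevant integrals are finite, the three-term discrepancy is unchanged by centering: ∬ k dP dP + ∬ k dQ dQ − 2 ∬ k dP dQ = ∬ k° dP dP + ∬ k° dQ dQ − 2 ∬ k° dP dQ. -/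
/-!
Against a product of probability measures `μ.prod ν`, the kernel `k°` integrates to
`∬ k dμ dν − ∫ k(·, z₀) dμ − ∫ k(z₀, ·) dν + k(z₀, z₀)`. In the three-term combination the
constants cancel since `1 + 1 − 2 = 0`, and the one-variable terms cancel because symmetry of `k`
gives `∫ k(·, z₀) dμ = ∫ k(z₀, ·) dμ`.
-/

open MeasureTheory

/-- The one-point centered kernel `k°(x,y) = k(x,y) − k(x,z₀) − k(z₀,y) + k(z₀,z₀)`. -/
def centeredKernel {X : Type*} (k : X → X → ℝ) (z₀ : X) (x y : X) : ℝ :=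
  k x y - k x z₀ - k z₀ y + k z₀ z₀

lemma integral_centeredKernel_prod {X : Type*} [MeasurableSpace X] (k : X → X → ℝ) (z₀ : X)
    (μ ν : Measure X) [IsProbabilityMeasure μ] [IsProbabilityMeasure ν]
    (hk : Integrable (fun z : X × X => k z.1 z.2) (μ.prod ν))
    (hkμ : Integrable (fun x => k x z₀) μ) (hkν : Integrable (fun y => k z₀ y) ν) :
    ∫ z : X × X, centeredKernel k z₀ z.1 z.2 ∂(μ.prod ν) =
      (∫ z : X × X, k z.1 z.2 ∂(μ.prod ν)) - (∫ x, k x z₀ ∂μ) - (∫ y, k z₀ y ∂ν) + k z₀ z₀ := by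
  have hfst := hkμ.comp_fst ν
  have hsnd := hkν.comp_snd μ
  simp only [centeredKernel]
  rw [integral_add ((hk.sub' hfst).sub' hsnd) (integrable_const _),
    integral_sub (hk.sub' hfst) hsnd, integral_sub hk hfst,
    integral_fun_fst (fun x => k x z₀), integral_fun_snd (fun y => k z₀ y)]
  simp

theorem kernel_discrepancy_centering_invariant_general
    {X : Type*} [MeasurableSpace X] (k : X → X → ℝ)
    (hsymm : ∀ x y, k x y = k y x) (z₀ : X)
    (P Q : Measure X) [IsProbabilityMeasure P] [IsProbabilityMeasure Q]
    (hPP : Integrable (fun z : X × X => k z.1 z.2) (P.prod P))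
    (hQQ : Integrable (fun z : X × X => k z.1 z.2) (Q.prod Q))
    (hPQ : Integrable (fun z : X × X => k z.1 z.2) (P.prod Q))
    (hPz : Integrable (fun x => k x z₀) P) (hQz : Integrable (fun x => k x z₀) Q)
    (hzP : Integrable (fun y => k z₀ y) P) (hzQ : Integrable (fun y => k z₀ y) Q) :
    (∫ z : X × X, k z.1 z.2 ∂(P.prod P)) + (∫ z : X × X, k z.1 z.2 ∂(Q.prod Q)) -
        2 * ∫ z : X × X, k z.1 z.2 ∂(P.prod Q) =
      (∫ z : X × X, centeredKernel k z₀ z.1 z.2 ∂(P.prod P)) +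
          (∫ z : X × X, centeredKernel k z₀ z.1 z.2 ∂(Q.prod Q)) -
        2 * ∫ z : X × X, centeredKernel k z₀ z.1 z.2 ∂(P.prod Q) := by
  have integral_symm_z₀ (μ : Measure X) : ∫ x, k x z₀ ∂μ = ∫ y, k z₀ y ∂μ := by
    simp_rw [hsymm _ z₀]
  rw [integral_centeredKernel_prod k z₀ P P hPP hPz hzP,
    integral_centeredKernel_prod k z₀ Q Q hQQ hQz hzQ,
    integral_centeredKernel_prod k z₀ P Q hPQ hPz hzQ, integral_symm_z₀ P, integral_symm_z₀ Q]
  ring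

/-- The three-term kernel discrepancy is unchanged by one-point centering:
`∬ k dP dP + ∬ k dQ dQ − 2∬ k dP dQ = ∬ k° dP dP + ∬ k° dQ dQ − 2∬ k° dP dQ`. -/
theorem kernel_discrepancy_centering_invariant
    {X : Type*} [MeasurableSpace X] (k : X → X → ℝ)
    (hk : Measurable fun z : X × X => k z.1 z.2)
    (hsymm : ∀ x y, k x y = k y x) (z₀ : X)
    (P Q : Measure X) [IsProbabilityMeasure P] [IsProbabilityMeasure Q]
    (hPP : Integrable (fun z : X × X => k z.1 z.2) (P.prod P))
    (hQQ : Integrable (fun z : X × X => k z.1 z.2) (Q.prod Q))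
    (hPQ : Integrable (fun z : X × X => k z.1 z.2) (P.prod Q))
    (hPz : Integrable (fun x => k x z₀) P) (hQz : Integrable (fun x => k x z₀) Q)
    (hzP : Integrable (fun y => k z₀ y) P) (hzQ : Integrable (fun y => k z₀ y) Q) :
    (∫ z : X × X, k z.1 z.2 ∂(P.prod P)) + (∫ z : X × X, k z.1 z.2 ∂(Q.prod Q)) -
        2 * ∫ z : X × X, k z.1 z.2 ∂(P.prod Q) =
      (∫ z : X × X, centeredKernel k z₀ z.1 z.2 ∂(P.prod P)) +
          (∫ z : X × X, centeredKernel k z₀ z.1 z.2 ∂(Q.prod Q)) -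
        2 * ∫ z : X × X, centeredKernel k z₀ z.1 z.2 ∂(P.prod Q) :=
  kernel_discrepancy_centering_invariant_general k hsymm z₀ P Q hPP hQQ hPQ hPz hQz hzP hzQ
end
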